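/- arXiv:1510.00911 — 2 statements merged into one kernel-verified Lean document; each statement's English description precedes it below -/
import Mathlib

section
/- A state-finite retractable automaton A contains a kernel (a subautomaton contained in every subautomaton of A) if and only if the set of principal subautomata of A forms a tree under inclusion, i.e., it is a meet-semilattice in which every two elements have a lower bound and every subset with an upper bound has a greatest element. -/
universe u v

/-- The transition function extended to words (`X*`). -/
def deltaStar {A X : Type*} (δ : A → X → A) : A → List X → A
  | a, [] => a
  | a, x :: p => deltaStar δ (δ a x) p

/-- `B` is a subautomaton of the automaton with transition `δ`. -/
def IsSubaut {A X : Type*} (δ : A → X → A) (B : Set A) : Prop :=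
  B.Nonempty ∧ ∀ b ∈ B, ∀ x : X, δ b x ∈ B

/-- `φ` is a retract homomorphism of the automaton onto the subautomaton `B`:
a homomorphism of `A` onto `B` leaving the elements of `B` fixed. -/
def IsRetractHom {A X : Type*} (δ : A → X → A) (B : Set A) (φ : A → A) : Prop :=
  (∀ a, φ a ∈ B) ∧ (∀ b ∈ B, φ b = b) ∧ ∀ a x, φ (δ a x) = δ (φ a) x

/-- `B` is a retract subautomaton. -/
def IsRetract {A X : Type*} (δ : A → X → A) (B : Set A) : Prop :=
  ∃ φ, IsRetractHom δ B φ

/-- An automaton is retractable if every subautomaton is retract. -/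
def Retractable {A X : Type*} (δ : A → X → A) : Prop :=
  ∀ B, IsSubaut δ B → IsRetract δ B

/-- Retractability of the subautomaton on the carrier `D` (homomorphisms are
represented by functions on the ambient state set, restricted to `D`). -/
def RetractableOn {A X : Type*} (δ : A → X → A) (D : Set A) : Prop :=
  ∀ C ⊆ D, IsSubaut δ C →
    ∃ φ : A → A, (∀ a ∈ D, φ a ∈ C) ∧ (∀ c ∈ C, φ c = c) ∧
      ∀ a ∈ D, ∀ x, φ (δ a x) = δ (φ a) x

/-- The principal subautomaton `R(a) = δ(a, X*)` generated by `a`. -/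
def Rset {A X : Type*} (δ : A → X → A) (a : A) : Set A :=
  {b | ∃ p : List X, deltaStar δ a p = b}

/-- The `R`-class `R_a = {b : R(b) = R(a)}`. -/
def Rclass {A X : Type*} (δ : A → X → A) (a : A) : Set A :=
  {b | Rset δ b = Rset δ a}

/-- `R[a] = R(a) − R_a`. -/
def Rideal {A X : Type*} (δ : A → X → A) (a : A) : Set A :=
  Rset δ a \ Rclass δ a

/-- The Rees congruence induced by `B`: two states are related iff they are
equal or both lie in `B`. -/
def reesRel {A : Type*} (B : Set A) (u v : A) : Prop :=
  u = v ∨ (u ∈ B ∧ v ∈ B)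

/-- A minimal subautomaton: a subautomaton with no proper subautomaton. -/
def IsMinimalSubaut {A X : Type*} (δ : A → X → A) (B : Set A) : Prop :=
  IsSubaut δ B ∧ ∀ C ⊆ B, IsSubaut δ C → C = B

/-- The automaton has a kernel: a subautomaton contained in every subautomaton. -/
def HasKernel {A X : Type*} (δ : A → X → A) : Prop :=
  ∃ K, IsSubaut δ K ∧ ∀ B, IsSubaut δ B → K ⊆ B

/-- The principal factor `R{a}` (the Rees factor of `R(a)` modulo `R[a]`,
described via the Rees congruence) is strongly connected. -/
def FactorSC {A X : Type*} (δ : A → X → A) (a : A) : Prop :=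
  ∀ b ∈ Rset δ a, ∀ c ∈ Rset δ a,
    ∃ p : List X, p ≠ [] ∧ reesRel (Rideal δ a) (deltaStar δ b p) c

/-- The principal factor `R{a}` is a strongly trap-connected non-trivial
one-trap automaton (with trap the class of `t`). -/
def FactorSTC {A X : Type*} (δ : A → X → A) (a : A) : Prop :=
  ∃ t ∈ Rset δ a,
    (∀ x, reesRel (Rideal δ a) (δ t x) t) ∧
    (∃ b ∈ Rset δ a, ¬ reesRel (Rideal δ a) b t) ∧
    (∀ b ∈ Rset δ a, (∀ x, reesRel (Rideal δ a) (δ b x) b) → reesRel (Rideal δ a) b t) ∧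
    (∀ b ∈ Rset δ a, ∀ c ∈ Rset δ a, ¬ reesRel (Rideal δ a) b t →
      ∃ p : List X, p ≠ [] ∧ reesRel (Rideal δ a) (deltaStar δ b p) c)

/-- The principal factor `R{a}` is a strongly trapped non-trivial one-trap
automaton (with trap the class of `t`). -/
def FactorST {A X : Type*} (δ : A → X → A) (a : A) : Prop :=
  ∃ t ∈ Rset δ a,
    (∃ b ∈ Rset δ a, ¬ reesRel (Rideal δ a) b t) ∧
    (∀ b ∈ Rset δ a, (∀ x, reesRel (Rideal δ a) (δ b x) b) → reesRel (Rideal δ a) b t) ∧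
    (∀ b ∈ Rset δ a, ∀ x, reesRel (Rideal δ a) (δ b x) t)

/-- Semiconnected: every principal factor is strongly connected or strongly
trap-connected. -/
def Semiconnected {A X : Type*} (δ : A → X → A) : Prop :=
  ∀ a, FactorSC δ a ∨ FactorSTC δ a

/-- The subautomaton on `D` is semiconnected, via the characterization: for
every subautomaton `C ⊆ D` and every `a ∈ C` there are `b ∈ C` and a nonempty
word `p` with `a = δ(b,p)`. -/
def SemiconnectedOn {A X : Type*} (δ : A → X → A) (D : Set A) : Prop :=
  ∀ C ⊆ D, IsSubaut δ C → ∀ a ∈ C, ∃ b ∈ C, ∃ p : List X, p ≠ [] ∧ deltaStar δ b p = a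

/-- The automaton is a dilation of its subautomaton `B`. -/
def IsDilationOf {A X : Type*} (δ : A → X → A) (B : Set A) : Prop :=
  IsSubaut δ B ∧ ∃ φ : A → A, (∀ a, φ a ∈ B) ∧ (∀ b ∈ B, φ b = b) ∧
    ∀ a x, δ a x = δ (φ a) x

/-- Extension of a partial transition function (`none` = the removed trap)
to words. -/
def pStar {C X : Type*} (d : C → X → Option C) : C → List X → Option C
  | a, [] => some a
  | a, x :: p => (d a x).bind fun b => pStar d b p

/-- The data of the Construction: a finite tree `(T, le)` with least element
`i0`; `C i` is the trap-removed part `A⁰ᵢ` of the automaton `Aᵢ`, with partial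
transition `d i` (`none` means the trap); `A_{i0}` is strongly connected and
the other `Aᵢ` are non-trivial strongly trap-connected one-trap automata;
`Φ i j` are the composite partial homomorphisms along covering chains
(given here as coherent data whose covering components satisfy conditions
(ii) and (iii)); `δ'` is the glued transition function on `A = ⋃ A⁰ᵢ`. -/
def ConstructionSpec {X : Type*} (T : Type*) (le : T → T → Prop) (i0 : T)
    (C : T → Type*) (d : ∀ i, C i → X → Option (C i))
    (Φ : ∀ i j, le j i → C i → C j)
    (δ' : (Σ i, C i) → X → Σ i, C i) : Prop :=
  (∀ i, le i i) ∧ (∀ i j, le i j → le j i → i = j) ∧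
  (∀ i j k, le i j → le j k → le i k) ∧
  Finite T ∧
  (∀ S : Set T, S.Nonempty → (∃ u, ∀ i ∈ S, le i u) → ∃ g ∈ S, ∀ i ∈ S, le i g) ∧
  (∀ i, le i0 i) ∧
  Nonempty (C i0) ∧
  (∀ (a : C i0) (x : X), (d i0 a x).isSome) ∧
  (∀ a b : C i0, ∃ p : List X, p ≠ [] ∧ pStar (d i0) a p = some b) ∧
  (∀ i, i ≠ i0 → Nonempty (C i) ∧
    (∀ a b : C i, ∃ p : List X, p ≠ [] ∧ pStar (d i) a p = some b) ∧
    (∀ a : C i, ∃ p : List X, p ≠ [] ∧ pStar (d i) a p = none)) ∧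
  (∀ i (h : le i i) (a : C i), Φ i i h a = a) ∧
  (∀ i j k (h1 : le j i) (h2 : le k j) (h3 : le k i) (a : C i),
    Φ j k h2 (Φ i j h1 a) = Φ i k h3 a) ∧
  (∀ i j (h : le j i), i ≠ j → (∀ k, le j k → le k i → k = j ∨ k = i) →
    (∀ (a : C i) (x : X) (b : C i),
      d i a x = some b → d j (Φ i j h a) x = some (Φ i j h b)) ∧
    ∃ (a : C i) (x : X), d i a x = none ∧ (d j (Φ i j h a) x).isSome) ∧
  (∀ i (a : C i) (x : X), ∃ (j : T) (hj : le j i) (b : C j),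
    δ' ⟨i, a⟩ x = ⟨j, b⟩ ∧ d j (Φ i j hj a) x = some b ∧
    ∀ k (hk : le k i), (d k (Φ i k hk a) x).isSome → le k j)


/-!
A kernel lies in every `R(a)`, so any two principal subautomata have a common lower bound;
conversely, given such lower bounds, a minimal principal subautomaton `R(k)` lies below every
`R(b)` and hence in every subautomaton.

The bounded-family condition is where retractability enters: principal subautomata inside a
common `R(u)` are comparable. Retract onto `R(a) ∪ R(b)`; the image of `u` lies in one of them,
say `R(a)`, and since the retraction fixes `b ∈ R(u)`, it sends `b` into `R(φ u) ⊆ R(a)`.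
A bounded family is therefore a finite chain and has a greatest element.
-/

section

variable {A X : Type*}

theorem deltaStar_append (δ : A → X → A) (a : A) (p q : List X) :
    deltaStar δ a (p ++ q) = deltaStar δ (deltaStar δ a p) q := by
  induction p generalizing a with
  | nil => rfl
  | cons x p ih => exact ih (δ a x)

theorem mem_Rset_self (δ : A → X → A) (a : A) : a ∈ Rset δ a := ⟨[], rfl⟩

theorem isSubaut_Rset (δ : A → X → A) (a : A) : IsSubaut δ (Rset δ a) := by
  refine ⟨⟨a, mem_Rset_self δ a⟩, ?_⟩
  rintro b ⟨p, rfl⟩ x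
  exact ⟨p ++ [x], deltaStar_append δ a p [x]⟩

theorem IsSubaut.union {δ : A → X → A} {B C : Set A}
    (hB : IsSubaut δ B) (hC : IsSubaut δ C) : IsSubaut δ (B ∪ C) := by
  refine ⟨hB.1.mono Set.subset_union_left, ?_⟩
  rintro b (hb | hb) x
  · exact Or.inl (hB.2 b hb x)
  · exact Or.inr (hC.2 b hb x)

theorem IsSubaut.deltaStar_mem {δ : A → X → A} {B : Set A}
    (hB : IsSubaut δ B) {k : A} (hk : k ∈ B) (p : List X) : deltaStar δ k p ∈ B := by
  induction p generalizing k with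
  | nil => exact hk
  | cons x p ih => exact ih (hB.2 k hk x)

theorem IsSubaut.Rset_subset {δ : A → X → A} {B : Set A}
    (hB : IsSubaut δ B) {k : A} (hk : k ∈ B) : Rset δ k ⊆ B := by
  rintro c ⟨p, rfl⟩
  exact hB.deltaStar_mem hk p

theorem Rset_subset_of_mem {δ : A → X → A} {a b : A} (h : b ∈ Rset δ a) :
    Rset δ b ⊆ Rset δ a :=
  (isSubaut_Rset δ a).Rset_subset h

theorem IsRetractHom.map_deltaStar {δ : A → X → A} {B : Set A} {φ : A → A}
    (hφ : IsRetractHom δ B φ) (a : A) (p : List X) :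
    φ (deltaStar δ a p) = deltaStar δ (φ a) p := by
  induction p generalizing a with
  | nil => rfl
  | cons x p ih => simp only [deltaStar, ih, hφ.2.2]

theorem IsRetractHom.mem_Rset_apply {δ : A → X → A} {B : Set A} {φ : A → A}
    (hφ : IsRetractHom δ B φ) {b u : A} (hb : b ∈ B) (hbu : b ∈ Rset δ u) :
    b ∈ Rset δ (φ u) := by
  obtain ⟨p, rfl⟩ := hbu
  exact ⟨p, by rw [← hφ.map_deltaStar, hφ.2.1 _ hb]⟩

theorem Retractable.Rset_total {δ : A → X → A} (h : Retractable δ)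
    {u a b : A} (ha : a ∈ Rset δ u) (hb : b ∈ Rset δ u) :
    Rset δ a ⊆ Rset δ b ∨ Rset δ b ⊆ Rset δ a := by
  obtain ⟨φ, hφ⟩ := h _ ((isSubaut_Rset δ a).union (isSubaut_Rset δ b))
  rcases hφ.1 u with hu | hu
  · exact Or.inr (Rset_subset_of_mem
      (Rset_subset_of_mem hu (hφ.mem_Rset_apply (Or.inr (mem_Rset_self δ b)) hb)))
  · exact Or.inl (Rset_subset_of_mem
      (Rset_subset_of_mem hu (hφ.mem_Rset_apply (Or.inl (mem_Rset_self δ a)) ha)))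

theorem Retractable.exists_greatest_of_bounded [Finite A] {δ : A → X → A}
    (h : Retractable δ) {S : Set (Set A)} (hS : S.Nonempty)
    (hprin : ∀ R ∈ S, ∃ a : A, R = Rset δ a) (hbdd : ∃ u : A, ∀ R ∈ S, R ⊆ Rset δ u) :
    ∃ g ∈ S, ∀ R ∈ S, R ⊆ g := by
  obtain ⟨u, hu⟩ := hbdd
  obtain ⟨g, hgS, hgmax⟩ := S.toFinite.exists_maximalFor id S hS
  refine ⟨g, hgS, fun R hR => ?_⟩
  obtain ⟨a, rfl⟩ := hprin R hR
  obtain ⟨b, rfl⟩ := hprin g hgS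
  exact (h.Rset_total (hu _ hR (mem_Rset_self δ a)) (hu _ hgS (mem_Rset_self δ b))).elim id
    (hgmax hR)

theorem HasKernel.exists_Rset_lower_bound {δ : A → X → A} (h : HasKernel δ)
    (a b : A) : ∃ c : A, Rset δ c ⊆ Rset δ a ∧ Rset δ c ⊆ Rset δ b := by
  obtain ⟨K, hK, hmin⟩ := h
  obtain ⟨k, hk⟩ := hK.1
  exact ⟨k, (hK.Rset_subset hk).trans (hmin _ (isSubaut_Rset δ a)),
    (hK.Rset_subset hk).trans (hmin _ (isSubaut_Rset δ b))⟩

theorem hasKernel_of_exists_Rset_lower_bound [Finite A] [Nonempty A] {δ : A → X → A}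
    (h : ∀ a b : A, ∃ c : A, Rset δ c ⊆ Rset δ a ∧ Rset δ c ⊆ Rset δ b) :
    HasKernel δ := by
  obtain ⟨k, -, hk⟩ :=
    Set.finite_univ.exists_minimalFor (Rset δ) Set.univ ⟨Classical.arbitrary A, trivial⟩
  refine ⟨Rset δ k, isSubaut_Rset δ k, fun B hB => ?_⟩
  obtain ⟨b, hb⟩ := hB.1
  obtain ⟨c, hck, hcb⟩ := h k b
  have hkc : Rset δ k = Rset δ c := (hk trivial hck).antisymm hck
  exact hkc ▸ hcb.trans (hB.Rset_subset hb)

end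

theorem stmt_3_general {A X : Type*} [Finite A] [Nonempty A]
    (δ : A → X → A) (h : Retractable δ) :
    HasKernel δ ↔
      ((∀ a b : A, ∃ c : A, Rset δ c ⊆ Rset δ a ∧ Rset δ c ⊆ Rset δ b) ∧
       (∀ S : Set (Set A), S.Nonempty → (∀ R ∈ S, ∃ a : A, R = Rset δ a) →
         (∃ u : A, ∀ R ∈ S, R ⊆ Rset δ u) → ∃ g ∈ S, ∀ R ∈ S, R ⊆ g)) :=
  ⟨fun hK => ⟨hK.exists_Rset_lower_bound, fun _ hS hprin hbdd =>
      h.exists_greatest_of_bounded hS hprin hbdd⟩,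
    fun hT => hasKernel_of_exists_Rset_lower_bound hT.1⟩

/-- Corollary 2: a state-finite retractable automaton contains a
kernel iff its principal subautomata form a tree under inclusion. -/
theorem stmt_3 {A X : Type*} [Finite A] [Nonempty A] [Nonempty X]
    (δ : A → X → A) (h : Retractable δ) :
    HasKernel δ ↔
      ((∀ a b : A, ∃ c : A, Rset δ c ⊆ Rset δ a ∧ Rset δ c ⊆ Rset δ b) ∧
       (∀ S : Set (Set A), S.Nonempty → (∀ R ∈ S, ∃ a : A, R = Rset δ a) →
         (∃ u : A, ∀ R ∈ S, R ⊆ Rset δ u) → ∃ g ∈ S, ∀ R ∈ S, R ⊆ g)) :=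
  stmt_3_general δ h
end

section
/- An automaton is retractable if and only if it is a dilation of a semiconnected retractable automaton. -/
universe u v

/-!
A retractable automaton retracts onto the subautomaton `AX` of states reached by one letter; since
a retraction commutes with the transitions and fixes `AX`, `δ(a, x) = δ(φ a, x)`, so the automaton
is a dilation of `AX`. Every state `a = δ(c, x)` of a subautomaton `C ⊆ AX` is then reached inside
`C` by the retraction `ψ` onto `C`: `a = ψ a = δ(ψ c, x)`, which is semiconnectedness of `AX`.
Conversely, if `A` is a dilation of a retractable `B` via `φ`, then for a subautomaton `C` of `A`
a retraction `ψ` of `B` onto `C ∩ B` extends to `A` by the identity on `C` and by `ψ ∘ φ` off `C`.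
-/

section

variable {A X : Type*} {δ : A → X → A}

/-- The paper's `AX`. -/
def stepImage (δ : A → X → A) : Set A :=
  {b | ∃ a x, δ a x = b}

theorem isSubaut_stepImage [Nonempty A] [Nonempty X] : IsSubaut δ (stepImage δ) := by
  obtain ⟨a⟩ := ‹Nonempty A›
  obtain ⟨x⟩ := ‹Nonempty X›
  exact ⟨⟨δ a x, a, x, rfl⟩, fun b _ y => ⟨b, y, rfl⟩⟩

theorem IsRetractHom.step_eq {C : Set A} {ψ : A → A} (hψ : IsRetractHom δ C ψ) {a : A}
    (ha : a ∈ C) (c : A) (x : X) (hca : δ c x = a) : δ (ψ c) x = a := by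
  rw [← hψ.2.2, hca, hψ.2.1 a ha]

theorem Retractable.isDilationOf_stepImage [Nonempty A] [Nonempty X] (h : Retractable δ) :
    IsDilationOf δ (stepImage δ) := by
  obtain ⟨φ, hφ⟩ : IsRetract δ (stepImage δ) := h _ isSubaut_stepImage
  exact ⟨isSubaut_stepImage, φ, hφ.1, hφ.2.1,
    fun a x => (hφ.step_eq ⟨a, x, rfl⟩ a x rfl).symm⟩

theorem Retractable.retractableOn (h : Retractable δ) (D : Set A) : RetractableOn δ D := by
  intro C _ hC
  obtain ⟨ψ, hψC, hψfix, hψhom⟩ := h C hC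
  exact ⟨ψ, fun a _ => hψC a, hψfix, fun a _ => hψhom a⟩

theorem Retractable.semiconnectedOn (h : Retractable δ) {D : Set A} (hD : D ⊆ stepImage δ) :
    SemiconnectedOn δ D := by
  intro C hCD hC a ha
  obtain ⟨c, x, hca⟩ := hD (hCD ha)
  obtain ⟨ψ, hψ⟩ : IsRetract δ C := h C hC
  exact ⟨ψ c, hψ.1 c, [x], List.cons_ne_nil x [], hψ.step_eq ha c x hca⟩

theorem IsDilationOf.step_mem {B : Set A} (h : IsDilationOf δ B) (a : A) (x : X) :
    δ a x ∈ B := by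
  obtain ⟨hB, φ, hφB, -, hφδ⟩ := h
  exact hφδ a x ▸ hB.2 _ (hφB a) x

theorem IsDilationOf.isSubaut_inter [Nonempty X] {B C : Set A} (h : IsDilationOf δ B)
    (hC : IsSubaut δ C) : IsSubaut δ (C ∩ B) := by
  obtain ⟨c, hc⟩ := hC.1
  obtain ⟨x⟩ := ‹Nonempty X›
  exact ⟨⟨δ c x, hC.2 c hc x, h.step_mem c x⟩,
    fun b hb y => ⟨hC.2 b hb.1 y, h.step_mem b y⟩⟩

open Classical in
theorem IsDilationOf.retractable [Nonempty X] {B : Set A} (h : IsDilationOf δ B)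
    (hB : RetractableOn δ B) : Retractable δ := by
  intro C hC
  obtain ⟨φ, hφB, hφfix, hφδ⟩ := h.2
  obtain ⟨ψ, hψC, hψfix, hψhom⟩ :=
    hB (C ∩ B) Set.inter_subset_right (h.isSubaut_inter hC)
  let χ : A → A := fun a => if a ∈ C then a else ψ (φ a)
  have hχ_eq_ψ : ∀ b ∈ B, χ b = ψ b := by
    intro b hb
    by_cases hbC : b ∈ C
    · simp [χ, hbC, hψfix b ⟨hbC, hb⟩]
    · simp [χ, hbC, hφfix b hb]
  refine ⟨χ, fun a => ?_, fun c hc => if_pos hc, fun a x => ?_⟩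
  · by_cases ha : a ∈ C
    · simp [χ, ha]
    · simpa [χ, ha] using (hψC (φ a) (hφB a)).1
  · by_cases ha : a ∈ C
    · simp [χ, ha, hC.2 a ha x]
    · rw [hχ_eq_ψ _ (h.step_mem a x), hφδ a x]
      simp [χ, ha, hψhom (φ a) (hφB a) x]

end

/-- Corollary 3: an automaton is retractable iff it is a
dilation of a semiconnected retractable automaton. -/
theorem stmt_15 {A X : Type*} [Nonempty A] [Nonempty X] (δ : A → X → A) :
    Retractable δ ↔
      ∃ B : Set A, IsDilationOf δ B ∧ RetractableOn δ B ∧ SemiconnectedOn δ B := by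
  constructor
  · intro h
    exact ⟨stepImage δ, h.isDilationOf_stepImage, h.retractableOn _, h.semiconnectedOn subset_rfl⟩
  · rintro ⟨B, hdil, hret, -⟩
    exact hdil.retractable hret
end
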